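/- Let ε ∈ (0,1), Δ > 0, and T > 0 with T·Δ² ≥ 1; write L = log(T·Δ²). Let Z₁, Z₂, … be i.i.d. real random variables such that Zᵢ − Δ′ is 1-subgaussian for some constant Δ′ ≥ (1−ε)Δ, and let Sₙ = Z₁ + ⋯ + Zₙ. Define the stopping time τ = inf{n ≥ 1 : 2(1−ε)Δ·|Sₙ| ≥ L}. Then E[τ] ≤ 2 + L/(2(1−ε)²Δ²) + (2√L + 2)/((1−ε)²Δ²). -/

import Mathlib

open MeasureTheory ProbabilityTheory Real
open scoped ENNReal NNReal

/-!
Write `a = (1 - ε) Δ ≤ Δ'`. As long as `τ > n` we have `2 a |Sₙ| < L`, in particular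
`Sₙ ≤ L / (2a)`, although `Sₙ` has drift `n Δ' ≥ n a`. The subgaussian Chernoff bound makes this
event exponentially unlikely, `P(τ > n) ≤ exp(-(n a - L/(2a))² / (2n))`, and once
`n ≥ L/(2a²) + √L/a²` the exponent is at least `a² (n - L/(2a²)) / (√L + 2)`, so these
probabilities decay geometrically. In `E[τ] ≤ 1 + ∑_{n ≥ 1} P(τ > n)` the first
`⌊L/(2a²) + √L/a²⌋` terms are bounded by `1` and the geometric rest by
`(1 - exp(-a²/(√L+2)))⁻¹ ≤ 1 + (√L + 2)/a²`.
-/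

/-- `W` is 1-subgaussian (mean-zero form): `E[exp(λW)] ≤ exp(λ²/2)` for all
`λ ∈ ℝ` (with the integrability of the moment generating function). -/
def IsOneSubgaussianMGF {Ω : Type*} [MeasurableSpace Ω] (μ : Measure Ω) (W : Ω → ℝ) : Prop :=
  ∀ l : ℝ, Integrable (fun ω => Real.exp (l * W ω)) μ ∧
    (∫ ω, Real.exp (l * W ω) ∂μ) ≤ Real.exp (l ^ 2 / 2)

lemma IsOneSubgaussianMGF.hasSubgaussianMGF {Ω : Type*} [MeasurableSpace Ω] {μ : Measure Ω}
    {W : Ω → ℝ} (h : IsOneSubgaussianMGF μ W) : HasSubgaussianMGF W 1 μ where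
  integrable_exp_mul t := (h t).1
  mgf_le t := by simpa [mgf] using (h t).2

open Classical in
lemma iInf_le_one_add_tsum_ite (P : ℕ → Prop) :
    ⨅ n ∈ {n : ℕ | 1 ≤ n ∧ P n}, (n : ℝ≥0∞) ≤ 1 + ∑' k, if P (k + 1) then 0 else 1 := by
  by_cases hex : ∃ n, 1 ≤ n ∧ P n
  · obtain ⟨hN1, hN⟩ := Nat.find_spec hex
    have hbefore : ∀ k < Nat.find hex - 1, ¬ P (k + 1) := fun k hk hP =>
      Nat.find_min hex (by omega) ⟨by omega, hP⟩
    calc ⨅ n ∈ {n : ℕ | 1 ≤ n ∧ P n}, (n : ℝ≥0∞)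
        ≤ ((Nat.find hex - 1 + 1 : ℕ) : ℝ≥0∞) :=
          iInf₂_le _ (by rw [Nat.sub_add_cancel hN1]; exact ⟨hN1, hN⟩)
      _ = 1 + ∑ k ∈ Finset.range (Nat.find hex - 1), if P (k + 1) then 0 else 1 := by
        rw [Finset.sum_congr rfl fun k hk => if_neg (hbefore k (Finset.mem_range.1 hk))]
        simp [add_comm]
      _ ≤ 1 + ∑' k, if P (k + 1) then 0 else 1 := by gcongr; exact ENNReal.sum_le_tsum _
  · push Not at hex
    simp [fun k => hex (k + 1) (Nat.le_add_left 1 k)]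

lemma ENNReal.tsum_le_of_le_one_of_le_geometric {p : ℕ → ℝ≥0∞} {r : ℝ≥0∞} (N : ℕ)
    (hp : ∀ k, p k ≤ 1) (hpr : ∀ k, p (k + N) ≤ r ^ k) : ∑' k, p k ≤ N + (1 - r)⁻¹ := by
  rw [← ENNReal.summable.sum_add_tsum_nat_add' (k := N), ← ENNReal.tsum_geometric]
  gcongr
  · simpa using Finset.sum_le_sum fun k (_ : k ∈ Finset.range N) => hp k
  · exact hpr _

lemma ENNReal.inv_one_sub_ofReal_exp_neg_le {q : ℝ} (hq : 0 < q) :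
    (1 - ENNReal.ofReal (exp (-q)))⁻¹ ≤ ENNReal.ofReal (1 + q⁻¹) := by
  have hexp : exp (-q) ≤ (1 + q)⁻¹ := by
    rw [exp_neg]; exact inv_anti₀ (by positivity) (by linarith [add_one_le_exp q])
  have hpos : 0 < 1 - (1 + q)⁻¹ := by
    rw [sub_pos]; exact inv_lt_one_of_one_lt₀ (by linarith)
  rw [← ENNReal.ofReal_one, ← ENNReal.ofReal_sub _ (exp_pos _).le,
    ← ENNReal.ofReal_inv_of_pos (by linarith)]
  refine ENNReal.ofReal_le_ofReal ((inv_anti₀ hpos (by linarith)).trans (le_of_eq ?_))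
  field_simp
  rw [add_sub_cancel_left, mul_div_cancel_left₀ _ hq.ne', add_comm]

lemma linear_le_chernoff_exponent {a m s x : ℝ} (ha : 0 < a) (ham : a ≤ m) (hs : 0 ≤ s)
    (hx0 : 0 < x) (hx : s ^ 2 / (2 * a ^ 2) + s / a ^ 2 ≤ x) :
    a ^ 2 / (s + 2) * (x - s ^ 2 / (2 * a ^ 2)) ≤ (x * m - s ^ 2 / (2 * a)) ^ 2 / (2 * x) := by
  set c := s ^ 2 / (2 * a ^ 2) with hc
  have hd : 0 ≤ s / a ^ 2 := by positivity
  have hcx : 0 ≤ x - c := by linarith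
  -- `x ≥ c + s / a²` is exactly the condition `(s + 2) c ≤ s x`
  have hslope : 2 * x ≤ (s + 2) * (x - c) := by
    have : s * (s / a ^ 2) = 2 * c := by rw [hc]; field_simp
    nlinarith
  have hdrift : a * (x - c) ≤ x * m - s ^ 2 / (2 * a) := by
    have : s ^ 2 / (2 * a) = a * c := by rw [hc]; field_simp
    nlinarith
  calc a ^ 2 / (s + 2) * (x - c) ≤ (a * (x - c)) ^ 2 / (2 * x) := by
        rw [div_mul_eq_mul_div, div_le_div_iff₀ (by positivity) (by positivity)]
        nlinarith [mul_le_mul_of_nonneg_left hslope (mul_nonneg (sq_nonneg a) hcx)]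
    _ ≤ (x * m - s ^ 2 / (2 * a)) ^ 2 / (2 * x) := by
        gcongr

section HittingTime

variable {Ω : Type*} [MeasurableSpace Ω] {μ : Measure Ω} {Z : ℕ → Ω → ℝ} {m : ℝ}

lemma lintegral_iInf_le_one_add_tsum_measure [IsProbabilityMeasure μ] {P : ℕ → Ω → Prop}
    (hP : ∀ n, MeasurableSet {ω | P n ω}) :
    ∫⁻ ω, ⨅ n ∈ {n : ℕ | 1 ≤ n ∧ P n ω}, (n : ℝ≥0∞) ∂μ ≤ 1 + ∑' k, μ {ω | ¬ P (k + 1) ω} := by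
  classical
  have hmeas : ∀ k, MeasurableSet {ω | ¬ P (k + 1) ω} := fun k => (hP (k + 1)).compl
  calc ∫⁻ ω, ⨅ n ∈ {n : ℕ | 1 ≤ n ∧ P n ω}, (n : ℝ≥0∞) ∂μ
      ≤ ∫⁻ ω, 1 + ∑' k, {ω | ¬ P (k + 1) ω}.indicator 1 ω ∂μ := by
        refine lintegral_mono fun ω => (iInf_le_one_add_tsum_ite _).trans_eq ?_
        simp [Set.indicator_apply, ite_not]
    _ = 1 + ∑' k, μ {ω | ¬ P (k + 1) ω} := by
        rw [lintegral_add_left measurable_const, lintegral_const, measure_univ, one_mul,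
          lintegral_tsum fun k => (measurable_one.indicator (hmeas k)).aemeasurable]
        simp only [lintegral_indicator_one (hmeas _)]

lemma measure_sum_range_le_le_of_iIndepFun [IsFiniteMeasure μ] (hindep : iIndepFun Z μ) {c : ℝ≥0}
    (hsub : ∀ i, HasSubgaussianMGF (fun ω => Z i ω - m) c μ) (n : ℕ) {r : ℝ} (hr : r ≤ n * m) :
    μ {ω | ∑ i ∈ Finset.range n, Z i ω ≤ r} ≤
      ENNReal.ofReal (exp (-(n * m - r) ^ 2 / (2 * n * c))) := by
  have hindep' : iIndepFun (fun i ω => m - Z i ω) μ :=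
    hindep.comp (fun _ x => m - x) fun _ => measurable_const.sub measurable_id
  have hsub' : ∀ i < n, HasSubgaussianMGF (fun ω => m - Z i ω) c μ := fun i _ =>
    (hsub i).neg.congr (ae_of_all _ fun ω => by simp)
  have hset : {ω | ∑ i ∈ Finset.range n, Z i ω ≤ r} =
      {ω | n * m - r ≤ ∑ i ∈ Finset.range n, (m - Z i ω)} := by
    ext ω
    simp only [Set.mem_ofPred_eq, Finset.sum_sub_distrib, Finset.sum_const, Finset.card_range,
      nsmul_eq_mul]
    constructor <;> intro h <;> linarith
  rw [hset, ← ENNReal.ofReal_toReal (measure_ne_top _ _)]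
  exact ENNReal.ofReal_le_ofReal
    (HasSubgaussianMGF.measure_sum_range_ge_le_of_iIndepFun hindep' hsub' (sub_nonneg.2 hr))

lemma measure_abs_sum_range_lt_le [IsFiniteMeasure μ] (hindep : iIndepFun Z μ)
    (hsub : ∀ i, HasSubgaussianMGF (fun ω => Z i ω - m) 1 μ) {a L : ℝ} (ha : 0 < a) (ham : a ≤ m)
    (hL : 0 ≤ L) {n : ℕ} (hn0 : 0 < n) (hn : L / (2 * a ^ 2) + √L / a ^ 2 ≤ n) :
    μ {ω | 2 * a * |∑ i ∈ Finset.range n, Z i ω| < L} ≤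
      ENNReal.ofReal (exp (-(a ^ 2 / (√L + 2) * (n - L / (2 * a ^ 2))))) := by
  have hsL : √L ^ 2 = L := sq_sqrt hL
  have hr : L / (2 * a) ≤ n * m := calc
    L / (2 * a) = a * (L / (2 * a ^ 2)) := by field_simp
    _ ≤ m * n := mul_le_mul ham (by linarith [div_nonneg (sqrt_nonneg L) (sq_nonneg a)])
      (by positivity) (by linarith)
    _ = n * m := mul_comm _ _
  calc μ {ω | 2 * a * |∑ i ∈ Finset.range n, Z i ω| < L}
      ≤ μ {ω | ∑ i ∈ Finset.range n, Z i ω ≤ L / (2 * a)} := by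
        refine measure_mono fun ω hω => ?_
        simp only [Set.mem_ofPred_eq] at hω ⊢
        rw [le_div_iff₀ (by positivity)]
        nlinarith [le_abs_self (∑ i ∈ Finset.range n, Z i ω)]
    _ ≤ ENNReal.ofReal (exp (-(n * m - L / (2 * a)) ^ 2 / (2 * n * (1 : ℝ≥0)))) :=
        measure_sum_range_le_le_of_iIndepFun hindep hsub n hr
    _ ≤ _ := by
        refine ENNReal.ofReal_le_ofReal (exp_le_exp.2 ?_)
        have := linear_le_chernoff_exponent ha ham (sqrt_nonneg L) (by exact_mod_cast hn0)
          (x := n) (by rwa [hsL])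
        rw [hsL] at this
        rw [NNReal.coe_one, mul_one, neg_div]
        linarith

lemma measure_abs_sum_range_lt_le_pow [IsFiniteMeasure μ] (hindep : iIndepFun Z μ)
    (hsub : ∀ i, HasSubgaussianMGF (fun ω => Z i ω - m) 1 μ) {a L : ℝ} (ha : 0 < a) (ham : a ≤ m)
    (hL : 0 ≤ L) (k : ℕ) :
    μ {ω | 2 * a * |∑ i ∈ Finset.range (k + ⌊L / (2 * a ^ 2) + √L / a ^ 2⌋₊ + 1), Z i ω| < L} ≤
      ENNReal.ofReal (exp (-(a ^ 2 / (√L + 2)))) ^ k := by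
  set c := L / (2 * a ^ 2) + √L / a ^ 2 with hc_def
  have hc : c < ⌊c⌋₊ + 1 := Nat.lt_floor_add_one c
  refine (measure_abs_sum_range_lt_le hindep hsub ha ham hL (by omega) ?_).trans ?_
  · push_cast
    linarith [(k.cast_nonneg : (0 : ℝ) ≤ k)]
  · rw [← ENNReal.ofReal_pow (exp_pos _).le, ← exp_nat_mul]
    gcongr
    have hM : 0 ≤ (⌊c⌋₊ : ℝ) + 1 - L / (2 * a ^ 2) := by
      linarith [div_nonneg (sqrt_nonneg L) (sq_nonneg a)]
    push_cast
    nlinarith [mul_nonneg (by positivity : 0 ≤ a ^ 2 / (√L + 2)) hM]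

lemma lintegral_hittingTime_abs_sum_range_le [IsProbabilityMeasure μ]
    (hmeas : ∀ i, Measurable (Z i)) (hindep : iIndepFun Z μ)
    (hsub : ∀ i, HasSubgaussianMGF (fun ω => Z i ω - m) 1 μ) {a L : ℝ} (ha : 0 < a) (ham : a ≤ m)
    (hL : 0 ≤ L) :
    ∫⁻ ω, ⨅ n ∈ {n : ℕ | 1 ≤ n ∧ L ≤ 2 * a * |∑ i ∈ Finset.range n, Z i ω|}, (n : ℝ≥0∞) ∂μ ≤
      ENNReal.ofReal (2 + L / (2 * a ^ 2) + (2 * √L + 2) / a ^ 2) := by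
  set q := a ^ 2 / (√L + 2) with hq_def
  set M := ⌊L / (2 * a ^ 2) + √L / a ^ 2⌋₊
  have hq : 0 < q := by positivity
  calc ∫⁻ ω, ⨅ n ∈ {n : ℕ | 1 ≤ n ∧ L ≤ 2 * a * |∑ i ∈ Finset.range n, Z i ω|}, (n : ℝ≥0∞) ∂μ
      ≤ 1 + ∑' k, μ {ω | ¬ L ≤ 2 * a * |∑ i ∈ Finset.range (k + 1), Z i ω|} :=
        lintegral_iInf_le_one_add_tsum_measure fun n => measurableSet_le measurable_const
          ((Finset.measurable_sum _ fun i _ => hmeas i).abs.const_mul _)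
    _ ≤ 1 + (M + (1 - ENNReal.ofReal (exp (-q)))⁻¹) := by
        simp_rw [not_le]
        gcongr
        exact ENNReal.tsum_le_of_le_one_of_le_geometric M (fun _ => prob_le_one)
          (measure_abs_sum_range_lt_le_pow hindep hsub ha ham hL)
    _ ≤ 1 + (M + ENNReal.ofReal (1 + q⁻¹)) := by
        gcongr
        exact ENNReal.inv_one_sub_ofReal_exp_neg_le hq
    _ = ENNReal.ofReal (1 + M + (1 + q⁻¹)) := by
        rw [ENNReal.ofReal_add (p := 1 + (M : ℝ)) (by positivity) (by positivity),
          ENNReal.ofReal_add zero_le_one M.cast_nonneg, ENNReal.ofReal_one,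
          ENNReal.ofReal_natCast, add_assoc]
    _ ≤ ENNReal.ofReal (2 + L / (2 * a ^ 2) + (2 * √L + 2) / a ^ 2) := by
        refine ENNReal.ofReal_le_ofReal ?_
        have hsplit : (2 * √L + 2) / a ^ 2 = √L / a ^ 2 + (√L + 2) / a ^ 2 := by ring
        rw [hq_def, inv_div]
        linarith [Nat.floor_le (by positivity : 0 ≤ L / (2 * a ^ 2) + √L / a ^ 2)]

end HittingTime

theorem stmt10_general {Ω : Type*} [MeasurableSpace Ω] (μ : Measure Ω) [IsProbabilityMeasure μ]
    (Z : ℕ → Ω → ℝ) (hmeas : ∀ i, Measurable (Z i))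
    (hindep : iIndepFun Z μ)
    (ε Δ T : ℝ) (hε : ε ∈ Set.Ioo (0 : ℝ) 1) (hΔ : 0 < Δ)
    (hTΔ : 1 ≤ T * Δ ^ 2)
    (Δ' : ℝ) (hΔ' : (1 - ε) * Δ ≤ Δ')
    (hsub : ∀ i, IsOneSubgaussianMGF μ (fun ω => Z i ω - Δ'))
    (L : ℝ) (hL : L = Real.log (T * Δ ^ 2)) :
    (∫⁻ ω, ⨅ n ∈ {n : ℕ | 1 ≤ n ∧
        L ≤ 2 * (1 - ε) * Δ * |∑ i ∈ Finset.range n, Z i ω|}, (n : ℝ≥0∞) ∂μ) ≤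
      ENNReal.ofReal (2 + L / (2 * (1 - ε) ^ 2 * Δ ^ 2)
        + (2 * Real.sqrt L + 2) / ((1 - ε) ^ 2 * Δ ^ 2)) := by
  have ha : 0 < (1 - ε) * Δ := mul_pos (sub_pos.2 hε.2) hΔ
  have hL0 : 0 ≤ L := hL ▸ log_nonneg hTΔ
  simp_rw [mul_assoc 2 (1 - ε) Δ, mul_assoc 2 ((1 - ε) ^ 2), ← mul_pow]
  exact lintegral_hittingTime_abs_sum_range_le hmeas hindep
    (fun i => (hsub i).hasSubgaussianMGF) ha hΔ' hL0

/-- Let `ε ∈ (0,1)`, `Δ > 0`, `T > 0`, `T·Δ² ≥ 1`, `L = log(T·Δ²)`.  Let `Z₁, Z₂, …` be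
i.i.d. with `Zᵢ − Δ′` 1-subgaussian for some constant `Δ′ ≥ (1−ε)Δ`, and
`Sₙ = Z₁ + ⋯ + Zₙ`.  For the stopping time `τ = inf{n ≥ 1 : 2(1−ε)Δ·|Sₙ| ≥ L}`
(equal to `∞` if no such `n` exists),
`E[τ] ≤ 2 + L/(2(1−ε)²Δ²) + (2√L + 2)/((1−ε)²Δ²)`. -/
theorem stmt10 {Ω : Type*} [MeasurableSpace Ω] (μ : Measure Ω) [IsProbabilityMeasure μ]
    (Z : ℕ → Ω → ℝ) (hmeas : ∀ i, Measurable (Z i))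
    (hindep : iIndepFun Z μ)
    (hident : ∀ i, IdentDistrib (Z i) (Z 0) μ μ)
    (ε Δ T : ℝ) (hε : ε ∈ Set.Ioo (0 : ℝ) 1) (hΔ : 0 < Δ) (hT : 0 < T)
    (hTΔ : 1 ≤ T * Δ ^ 2)
    (Δ' : ℝ) (hΔ' : (1 - ε) * Δ ≤ Δ')
    (hsub : ∀ i, IsOneSubgaussianMGF μ (fun ω => Z i ω - Δ'))
    (L : ℝ) (hL : L = Real.log (T * Δ ^ 2)) :
    (∫⁻ ω, ⨅ n ∈ {n : ℕ | 1 ≤ n ∧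
        L ≤ 2 * (1 - ε) * Δ * |∑ i ∈ Finset.range n, Z i ω|}, (n : ℝ≥0∞) ∂μ) ≤
      ENNReal.ofReal (2 + L / (2 * (1 - ε) ^ 2 * Δ ^ 2)
        + (2 * Real.sqrt L + 2) / ((1 - ε) ^ 2 * Δ ^ 2)) :=
  stmt10_general μ Z hmeas hindep ε Δ T hε hΔ hTΔ Δ' hΔ' hsub L hL
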